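/- arXiv:2312.03149 — 3 statements merged into one kernel-verified Lean document; each statement's English description precedes it below -/
import Mathlib

section
/- Let G be a nut graph with vertex orbits V_1, …, V_k under Aut(G), and let x be a nonzero kernel vector of the adjacency matrix of G. Suppose every orbit V_ℓ is an independent set in G and the vertex-orbit graph of G is a cycle of odd length. Then for every orbit V_i the sum of the entries of x over V_i is zero; moreover, within each orbit V_i the number of vertices with positive entry equals the number with negative entry, and each orbit V_i has even size. -/
/-!
Write `𝟙_O` for the indicator vector of a vertex orbit `O`. Since the adjacency matrix `A` is
symmetric, `0 = 𝟙_O ⬝ A x = (A 𝟙_O) ⬝ x`, and `(A 𝟙_O) u` is the number of neighbours of `u`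
in `O`, which is constant on orbits because automorphisms preserve `A` and `O`. If the orbits are
independent and the orbit graph is a cycle `O_0, …, O_{n-1}`, the neighbours of `O_k` lie in
`O_{k-1} ∪ O_{k+1}`, so `a · 𝟙_{O_{k-1}} ⬝ x + b · 𝟙_{O_{k+1}} ⬝ x = 0` with `a, b > 0`. The signs
of the orbit sums therefore alternate in steps of two, which around an odd cycle forces them all
to vanish. In a nut graph the kernel is spanned by `x`, so each automorphism maps `x` to `±x`:
`|x|` is a nonzero constant on every orbit, and a vanishing orbit sum means equally many positive
and negative entries.
-/

namespace NutPaper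

open Matrix

variable {V : Type*}

open scoped Classical in
/-- The real adjacency matrix of a simple graph. -/
noncomputable def adjMat (G : SimpleGraph V) : Matrix V V ℝ :=
  Matrix.of fun u v => if G.Adj u v then (1 : ℝ) else 0

/-- A nut graph: the adjacency matrix has nullity exactly one, and every
nonzero kernel vector has all entries nonzero. -/
def IsNutGraph [Fintype V] (G : SimpleGraph V) : Prop :=
  Module.finrank ℝ (LinearMap.ker (Matrix.mulVecLin (adjMat G))) = 1 ∧
  ∀ x : V → ℝ, adjMat G *ᵥ x = 0 → x ≠ 0 → ∀ v, x v ≠ 0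

/-- The orbit of a vertex under the full automorphism group. -/
def vertexOrbit (G : SimpleGraph V) (v : V) : Set V :=
  {u | ∃ α : G ≃g G, α v = u}

/-- The set of vertex orbits. -/
def vertexOrbits (G : SimpleGraph V) : Set (Set V) :=
  Set.range (vertexOrbit G)

/-- The number of vertex orbits. -/
noncomputable def numVertexOrbits (G : SimpleGraph V) : ℕ :=
  Nat.card (vertexOrbits G)

/-- The orbit of an edge under the full automorphism group. -/
def edgeOrbit (G : SimpleGraph V) (e : Sym2 V) : Set (Sym2 V) :=
  {f | ∃ α : G ≃g G, Sym2.map (⇑α) e = f}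

/-- The set of edge orbits. -/
def edgeOrbits (G : SimpleGraph V) : Set (Set (Sym2 V)) :=
  edgeOrbit G '' G.edgeSet

/-- The number of edge orbits. -/
noncomputable def numEdgeOrbits (G : SimpleGraph V) : ℕ :=
  Nat.card (edgeOrbits G)


/-- The vertex-orbit graph of `G`: vertices are the vertex orbits of `G`, and
two distinct orbits are adjacent when some edge of `G` joins them. -/
def orbitGraph (G : SimpleGraph V) : SimpleGraph (vertexOrbits G) where
  Adj O₁ O₂ := O₁ ≠ O₂ ∧ ∃ u ∈ (O₁ : Set V), ∃ w ∈ (O₂ : Set V), G.Adj u w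
  symm := by
    refine ⟨?_⟩
    rintro O₁ O₂ ⟨hne, u, hu, w, hw, h⟩
    exact ⟨hne.symm, w, hw, u, hu, h.symm⟩
  loopless := by
    refine ⟨?_⟩
    rintro O ⟨hne, -⟩
    exact hne rfl

open Finset

section Orbits

variable {G : SimpleGraph V}

lemma vertexOrbit_eq_orbit (G : SimpleGraph V) (v : V) :
    vertexOrbit G v = MulAction.orbit (G ≃g G) v := rfl

lemma mem_vertexOrbit_self (G : SimpleGraph V) (v : V) : v ∈ vertexOrbit G v :=
  MulAction.mem_orbit_self v

lemma apply_mem_of_mem_vertexOrbits {O : Set V} (hO : O ∈ vertexOrbits G) (α : G ≃g G)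
    {v : V} (hv : v ∈ O) : α v ∈ O := by
  obtain ⟨w, rfl⟩ := hO
  exact MulAction.mem_orbit_of_mem_orbit α hv

lemma exists_iso_apply_eq_of_mem_vertexOrbits {O : Set V} (hO : O ∈ vertexOrbits G)
    {u w : V} (hu : u ∈ O) (hw : w ∈ O) : ∃ α : G ≃g G, α u = w := by
  obtain ⟨z, rfl⟩ := hO
  rw [vertexOrbit_eq_orbit, ← MulAction.orbit_eq_iff.mpr hu] at hw
  exact hw

lemma vertexOrbits_pairwiseDisjoint : (vertexOrbits G).PairwiseDisjoint id :=
  MulAction.orbit.pairwiseDisjoint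

lemma indicator_one_comp_iso {O : Set V} (hO : O ∈ vertexOrbits G) (α : G ≃g G) :
    O.indicator (1 : V → ℝ) ∘ α = O.indicator 1 := by
  have hmem : ∀ v, α v ∈ O ↔ v ∈ O := fun v =>
    ⟨fun h => by simpa using apply_mem_of_mem_vertexOrbits hO α.symm h,
      apply_mem_of_mem_vertexOrbits hO α⟩
  ext v
  by_cases hv : v ∈ O
  · simp [hv, (hmem v).mpr hv]
  · simp [hv, mt (hmem v).mp hv]

end Orbits

lemma adjMat_submatrix_iso (G : SimpleGraph V) (α : G ≃g G) :
    (adjMat G).submatrix α α = adjMat G := by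
  ext u v
  simp only [submatrix_apply, adjMat, of_apply]
  classical
  exact if_congr α.map_adj_iff rfl rfl

lemma adjMat_mulVec_comp_iso [Fintype V] (G : SimpleGraph V) (α : G ≃g G) (x : V → ℝ) :
    adjMat G *ᵥ (x ∘ α) = (adjMat G *ᵥ x) ∘ α := by
  conv_lhs => rw [← adjMat_submatrix_iso G α]
  refine (submatrix_mulVec_equiv (adjMat G) (x ∘ α) α α.toEquiv).trans ?_
  congr 2
  ext v
  exact congrArg x (α.apply_symm_apply v)

lemma abs_eq_one_of_comp_eq_smul {ι : Type*} [Fintype ι] (σ : ι ≃ ι) {x : ι → ℝ} (hx : x ≠ 0)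
    {c : ℝ} (h : x ∘ σ = c • x) : |c| = 1 := by
  have hxx : x ⬝ᵥ x ≠ 0 := mt dotProduct_self_eq_zero.mp hx
  have hc : c * c * (x ⬝ᵥ x) = 1 * (x ⬝ᵥ x) :=
    calc c * c * (x ⬝ᵥ x) = (c • x) ⬝ᵥ (c • x) := by
          rw [smul_dotProduct, dotProduct_smul, smul_eq_mul, smul_eq_mul, mul_assoc]
      _ = 1 * (x ⬝ᵥ x) := by rw [← h, comp_equiv_dotProduct_comp_equiv, one_mul]
  rcases mul_self_eq_one_iff.mp (mul_right_cancel₀ hxx hc) with rfl | rfl <;> simp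

lemma abs_apply_iso [Fintype V] {G : SimpleGraph V}
    (hrank : Module.finrank ℝ (LinearMap.ker (Matrix.mulVecLin (adjMat G))) = 1)
    {x : V → ℝ} (hker : adjMat G *ᵥ x = 0) (hx : x ≠ 0) (α : G ≃g G) (v : V) :
    |x (α v)| = |x v| := by
  have hα : adjMat G *ᵥ (x ∘ α) = 0 := by
    rw [adjMat_mulVec_comp_iso, hker]
    rfl
  obtain ⟨c, hc⟩ := (finrank_eq_one_iff_of_nonzero'
    (⟨x, hker⟩ : LinearMap.ker (mulVecLin (adjMat G))) (mt (congrArg Subtype.val) hx)).mp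
    hrank ⟨x ∘ α, hα⟩
  have hc' : x ∘ α = c • x := congrArg Subtype.val hc.symm
  rw [← Function.comp_apply (f := x), hc', Pi.smul_apply, smul_eq_mul, abs_mul,
    abs_eq_one_of_comp_eq_smul α.toEquiv hx hc', one_mul]

lemma sign_eq_neg_sign_of_pos_mul_add_pos_mul_eq_zero {a b s t : ℝ} (ha : 0 < a) (hb : 0 < b)
    (h : a * s + b * t = 0) : SignType.sign t = -SignType.sign s := by
  have ht : t = -(a / b) * s := by
    field_simp
    linarith
  rw [ht, sign_mul, sign_neg (neg_neg_of_pos (div_pos ha hb)), neg_one_mul]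

lemma adjMat_transpose (G : SimpleGraph V) : (adjMat G)ᵀ = adjMat G := by
  ext u v
  simp only [transpose_apply, adjMat, of_apply]
  classical
  exact if_congr (G.adj_comm v u) rfl rfl

section NeighbourCounts

variable [Fintype V] {G : SimpleGraph V} {O A B : Set V}

lemma indicator_one_dotProduct (s : Set V) (x : V → ℝ) :
    s.indicator 1 ⬝ᵥ x = ∑ᶠ v ∈ s, x v := by
  rw [finsum_mem_def, finsum_eq_sum_of_fintype, dotProduct]
  refine sum_congr rfl fun v _ => ?_
  by_cases hv : v ∈ s <;> simp [hv]

lemma adjMat_mulVec_indicator_apply_eq {O P : Set V} (hO : O ∈ vertexOrbits G)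
    (hP : P ∈ vertexOrbits G) {u w : V} (hu : u ∈ P) (hw : w ∈ P) :
    (adjMat G *ᵥ O.indicator 1) u = (adjMat G *ᵥ O.indicator 1) w := by
  obtain ⟨α, rfl⟩ := exists_iso_apply_eq_of_mem_vertexOrbits hP hu hw
  rw [← Function.comp_apply (f := adjMat G *ᵥ _), ← adjMat_mulVec_comp_iso,
    indicator_one_comp_iso hO]

lemma adjMat_mulVec_indicator_apply_eq_zero {O : Set V} {u : V} (hu : ∀ v ∈ O, ¬ G.Adj u v) :
    (adjMat G *ᵥ O.indicator 1) u = 0 := by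
  refine sum_eq_zero fun v _ => ?_
  by_cases hv : v ∈ O <;> simp [adjMat, hv, hu]

lemma adjMat_mulVec_indicator_apply_pos {O : Set V} {u v : V} (hv : v ∈ O) (huv : G.Adj u v) :
    0 < (adjMat G *ᵥ O.indicator 1) u := by
  refine sum_pos' (fun w _ => mul_nonneg ?_ (Set.indicator_nonneg (fun _ _ => zero_le_one) w))
    ⟨v, mem_univ v, by simp [adjMat, hv, huv]⟩
  simp only [adjMat, of_apply]
  split_ifs <;> norm_num

lemma adjMat_mulVec_indicator_eq (hO : O ∈ vertexOrbits G) (hA : A ∈ vertexOrbits G)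
    (hB : B ∈ vertexOrbits G) (hAB : Disjoint A B)
    (hcover : ∀ u, ∀ v ∈ O, G.Adj u v → u ∈ A ∪ B) {a b : V} (ha : a ∈ A) (hb : b ∈ B) :
    adjMat G *ᵥ O.indicator 1 = (adjMat G *ᵥ O.indicator 1) a • A.indicator 1 +
      (adjMat G *ᵥ O.indicator 1) b • B.indicator 1 := by
  ext u
  by_cases huA : u ∈ A
  · have huB : u ∉ B := hAB.notMem_of_mem_left huA
    simp [huA, huB, adjMat_mulVec_indicator_apply_eq hO hA huA ha]
  by_cases huB : u ∈ B
  · simp [huA, huB, adjMat_mulVec_indicator_apply_eq hO hB huB hb]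
  have hu : ∀ v ∈ O, ¬ G.Adj u v := fun v hv huv => (hcover u v hv huv).elim huA huB
  simp [huA, huB, adjMat_mulVec_indicator_apply_eq_zero hu]

lemma sign_indicator_dotProduct_eq_neg {x : V → ℝ} (hker : adjMat G *ᵥ x = 0)
    (hO : O ∈ vertexOrbits G) (hA : A ∈ vertexOrbits G) (hB : B ∈ vertexOrbits G)
    (hAB : Disjoint A B) (hcover : ∀ u, ∀ v ∈ O, G.Adj u v → u ∈ A ∪ B)
    {a b v w : V} (ha : a ∈ A) (hv : v ∈ O) (hav : G.Adj a v)
    (hb : b ∈ B) (hw : w ∈ O) (hbw : G.Adj b w) :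
    SignType.sign (B.indicator 1 ⬝ᵥ x) = -SignType.sign (A.indicator 1 ⬝ᵥ x) := by
  set d := adjMat G *ᵥ O.indicator 1
  have hd : d = d a • A.indicator 1 + d b • B.indicator 1 :=
    adjMat_mulVec_indicator_eq hO hA hB hAB hcover ha hb
  refine sign_eq_neg_sign_of_pos_mul_add_pos_mul_eq_zero
    (adjMat_mulVec_indicator_apply_pos hv hav) (adjMat_mulVec_indicator_apply_pos hw hbw) ?_
  calc d a * (A.indicator 1 ⬝ᵥ x) + d b * (B.indicator 1 ⬝ᵥ x)
      = d ⬝ᵥ x := by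
        conv_rhs => rw [hd]
        rw [add_dotProduct, smul_dotProduct, smul_dotProduct, smul_eq_mul, smul_eq_mul]
    _ = O.indicator 1 ⬝ᵥ (adjMat G *ᵥ x) := by
        rw [dotProduct_mulVec, ← mulVec_transpose, adjMat_transpose]
    _ = 0 := by rw [hker, dotProduct_zero]

end NeighbourCounts

lemma eq_zero_of_odd_of_forall_add_two_eq_neg {n : ℕ} [NeZero n] (hn : Odd n)
    {σ : Fin n → SignType} (h : ∀ k, σ (k + 2) = -σ k) (k : Fin n) : σ k = 0 := by
  have hiter : ∀ j : ℕ, σ (k + j • 2) = (-1) ^ j * σ k := by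
    intro j
    induction j with
    | zero => simp
    | succ j ih => rw [succ_nsmul, ← add_assoc, h, ih, pow_succ, mul_right_comm, mul_neg_one]
  have hn2 : n • (2 : Fin n) = 0 := by simpa using card_nsmul_eq_zero (x := (2 : Fin n))
  have hk := hiter n
  rw [hn2, add_zero, hn.neg_one_pow, neg_one_mul] at hk
  generalize σ k = s at hk
  revert s
  decide

lemma sub_one_ne_add_one {m : ℕ} (j : Fin (m + 3)) : j - 1 ≠ j + 1 := by
  intro h
  have h2 : (2 : Fin (m + 3)) ≠ 0 := by
    simp [Fin.ext_iff, Nat.mod_eq_of_lt (show 2 < m + 3 by omega)]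
  apply h2
  calc (2 : Fin (m + 3)) = 1 + 1 := rfl
    _ = (j + 1) - (j - 1) := by abel
    _ = 0 := by rw [h, sub_self]

section OddCycle

variable {G : SimpleGraph V}

lemma orbitGraph_adj_of_adj (hindep : ∀ O ∈ vertexOrbits G, ∀ u ∈ O, ∀ w ∈ O, ¬ G.Adj u w)
    {O : Set V} (hO : O ∈ vertexOrbits G) {u v : V} (hv : v ∈ O) (huv : G.Adj u v) :
    (orbitGraph G).Adj ⟨vertexOrbit G u, u, rfl⟩ ⟨O, hO⟩ := by
  refine ⟨fun h => ?_, u, mem_vertexOrbit_self G u, v, hv, huv⟩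
  have hOu : vertexOrbit G u = O := congrArg Subtype.val h
  exact hindep O hO u (hOu ▸ mem_vertexOrbit_self G u) v hv huv

lemma mem_union_of_orbitGraph_iso_cycleGraph
    (hindep : ∀ O ∈ vertexOrbits G, ∀ u ∈ O, ∀ w ∈ O, ¬ G.Adj u w) {m : ℕ}
    (e : orbitGraph G ≃g SimpleGraph.cycleGraph (m + 2)) (j : Fin (m + 2)) {u v : V}
    (hv : v ∈ (e.symm j : Set V)) (huv : G.Adj u v) :
    u ∈ (e.symm (j - 1) : Set V) ∪ e.symm (j + 1) := by
  set P : vertexOrbits G := ⟨vertexOrbit G u, u, rfl⟩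
  have hu : u ∈ (e.symm (e P) : Set V) := by
    rw [e.symm_apply_apply]
    exact mem_vertexOrbit_self G u
  have hadj : (SimpleGraph.cycleGraph (m + 2)).Adj j (e P) := by
    simpa using (e.map_adj_iff.mpr (orbitGraph_adj_of_adj hindep (e.symm j).2 hv huv)).symm
  rw [← SimpleGraph.mem_neighborSet, SimpleGraph.cycleGraph_neighborSet] at hadj
  rcases hadj with h | h <;> rw [h] at hu
  exacts [Or.inl hu, Or.inr hu]

end OddCycle

theorem indicator_dotProduct_eq_zero_of_orbitGraph_iso_cycleGraph [Fintype V]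
    {G : SimpleGraph V} {x : V → ℝ} (hker : adjMat G *ᵥ x = 0)
    (hindep : ∀ O ∈ vertexOrbits G, ∀ u ∈ O, ∀ w ∈ O, ¬ G.Adj u w) {m : ℕ} (hodd : Odd (m + 3))
    (e : orbitGraph G ≃g SimpleGraph.cycleGraph (m + 3)) {O : Set V}
    (hO : O ∈ vertexOrbits G) : O.indicator 1 ⬝ᵥ x = 0 := by
  set s : Fin (m + 3) → ℝ := fun k => (e.symm k : Set V).indicator 1 ⬝ᵥ x
  have hedge : ∀ {j k}, (SimpleGraph.cycleGraph (m + 3)).Adj j k →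
      ∃ a ∈ (e.symm j : Set V), ∃ v ∈ (e.symm k : Set V), G.Adj a v :=
    fun h => (e.symm.map_adj_iff.mpr h).2
  have hsign : ∀ j, SignType.sign (s (j + 1)) = -SignType.sign (s (j - 1)) := by
    intro j
    obtain ⟨a, ha, v, hv, hav⟩ :=
      hedge (SimpleGraph.cycleGraph_adj (n := m + 1).mpr (Or.inr (sub_sub_cancel j 1)))
    obtain ⟨b, hb, w, hw, hbw⟩ :=
      hedge (SimpleGraph.cycleGraph_adj (n := m + 1).mpr (Or.inl (add_sub_cancel_left j 1)))
    exact sign_indicator_dotProduct_eq_neg hker (e.symm j).2 (e.symm _).2 (e.symm _).2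
      (vertexOrbits_pairwiseDisjoint (e.symm _).2 (e.symm _).2
        (Subtype.coe_injective.ne (e.symm.injective.ne (sub_one_ne_add_one j))))
      (fun u v hv huv => mem_union_of_orbitGraph_iso_cycleGraph hindep e j hv huv)
      ha hv hav hb hw hbw
  have hzero := eq_zero_of_odd_of_forall_add_two_eq_neg hodd (σ := fun k => SignType.sign (s k))
    (fun k => by
      have hk := hsign (k + 1)
      rwa [add_sub_cancel_right, add_assoc] at hk) (e ⟨O, hO⟩)
  simpa [s] using hzero

section Counting

variable {ι : Type*} {f : ι → ℝ}

lemma filter_not_pos_eq_filter_neg (s : Finset ι) (hf : ∀ i ∈ s, f i ≠ 0) :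
    {i ∈ s | ¬ 0 < f i} = {i ∈ s | f i < 0} :=
  filter_congr fun i hi => by rw [not_lt, le_iff_lt_or_eq, or_iff_left (hf i hi)]

lemma card_filter_pos_eq_card_filter_neg (s : Finset ι) {c : ℝ} (hc : c ≠ 0)
    (hf : ∀ i ∈ s, |f i| = c) (hsum : ∑ i ∈ s, f i = 0) :
    #{i ∈ s | 0 < f i} = #{i ∈ s | f i < 0} := by
  have hf0 : ∀ i ∈ s, f i ≠ 0 := fun i hi h0 => hc (by rw [← hf i hi, h0, abs_zero])
  have hpos : ∀ i ∈ s.filter (0 < f ·), f i = c := fun i hi => by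
    rw [mem_filter] at hi
    rw [← hf i hi.1, abs_of_pos hi.2]
  have hneg : ∀ i ∈ s.filter (f · < 0), f i = -c := fun i hi => by
    rw [mem_filter] at hi
    rw [← hf i hi.1, abs_of_neg hi.2, neg_neg]
  rw [← sum_filter_add_sum_filter_not s (0 < f ·), filter_not_pos_eq_filter_neg s hf0,
    sum_congr rfl hpos, sum_congr rfl hneg, sum_const, sum_const, nsmul_eq_mul, nsmul_eq_mul]
    at hsum
  have hmul : (#{i ∈ s | 0 < f i} : ℝ) * c = #{i ∈ s | f i < 0} * c := by linarith
  exact_mod_cast mul_right_cancel₀ hc hmul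

lemma natCard_pos_eq_natCard_neg_and_even {s : Set ι} (hs : s.Finite) {c : ℝ}
    (hc : c ≠ 0) (hf : ∀ i ∈ s, |f i| = c) (hsum : ∑ᶠ i ∈ s, f i = 0) :
    Nat.card {i | i ∈ s ∧ 0 < f i} = Nat.card {i | i ∈ s ∧ f i < 0} ∧ Even (Nat.card s) := by
  lift s to Finset ι using hs
  rw [finsum_mem_coe_finset] at hsum
  have hcount := card_filter_pos_eq_card_filter_neg s hc hf hsum
  have hf0 : ∀ i ∈ s, f i ≠ 0 := fun i hi h0 => hc (by rw [← hf i hi, h0, abs_zero])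
  have hset (p : ι → Prop) [DecidablePred p] : {i | i ∈ (s : Set ι) ∧ p i} = ↑(s.filter p) :=
    (coe_filter (p := p) s).symm
  simp only [hset, Nat.card_coe_set_eq, Set.ncard_coe_finset]
  refine ⟨hcount, ⟨#{i ∈ s | 0 < f i}, ?_⟩⟩
  conv_lhs => rw [← card_filter_add_card_filter_not (0 < f ·)]
  rw [filter_not_pos_eq_filter_neg s hf0, hcount]

end Counting

/-- If every vertex orbit of a nut graph is an independent set
and the vertex-orbit graph is a cycle of odd length, then the kernel-vector
entries sum to zero over every vertex orbit; moreover each orbit has as many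
positive as negative entries, and hence even size. -/
theorem nut_oddCycle_orbit_sums_zero {V : Type*} [Fintype V]
    (G : SimpleGraph V)
    (hnut : IsNutGraph G)
    (x : V → ℝ) (hker : adjMat G *ᵥ x = 0) (hx : x ≠ 0)
    (hindep : ∀ O ∈ vertexOrbits G, ∀ u ∈ O, ∀ w ∈ O, ¬ G.Adj u w)
    (hcycle : ∃ n : ℕ, Odd n ∧ 3 ≤ n ∧
      Nonempty (orbitGraph G ≃g SimpleGraph.cycleGraph n)) :
    ∀ Oi ∈ vertexOrbits G,
      (∑ᶠ v ∈ Oi, x v = 0) ∧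
      Nat.card {v : V | v ∈ Oi ∧ 0 < x v} = Nat.card {v : V | v ∈ Oi ∧ x v < 0} ∧
      Even (Nat.card Oi) := by
  intro Oi hOi
  obtain ⟨n, hodd, hn3, ⟨e⟩⟩ := hcycle
  obtain ⟨m, rfl⟩ := Nat.exists_eq_add_of_le' hn3
  have hsum : ∑ᶠ v ∈ Oi, x v = 0 := by
    rw [← indicator_one_dotProduct]
    exact indicator_dotProduct_eq_zero_of_orbitGraph_iso_cycleGraph hker hindep hodd e hOi
  obtain ⟨z, rfl⟩ := hOi
  have habs : ∀ v ∈ vertexOrbit G z, |x v| = |x z| := by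
    rintro v ⟨α, rfl⟩
    exact abs_apply_iso hnut.1 hker hx α z
  exact ⟨hsum, natCard_pos_eq_natCard_neg_and_even (Set.toFinite _)
    (abs_ne_zero.mpr (hnut.2 x hker hx z)) habs hsum⟩

end NutPaper
end

section
/- For every n ≥ 5, the Rose Window graph R_n(1,2) is a core graph; moreover, R_n(1,2) is a nut graph if and only if n is not divisible by 3, and when n is divisible by 3 its adjacency matrix has nullity 3. -/
namespace NutPaper

open Matrix

variable {V : Type*}

/-- A core graph: the kernel of the adjacency matrix contains a vector all of
whose entries are nonzero (in particular the nullity is at least one when the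
vertex set is nonempty). -/
def IsCoreGraph [Fintype V] (G : SimpleGraph V) : Prop :=
  ∃ x : V → ℝ, adjMat G *ᵥ x = 0 ∧ ∀ v, x v ≠ 0

/-- The Rose Window graph `R_n(1, 2)`.  Vertex `(0, i)` is `v_i` and vertex
`(1, i)` is `u_i`; the edges are `v_i v_{i+1}`, `u_i u_{i+2}`, `u_i v_i` and
`u_i v_{i+1}`, indices mod `n`. -/
def roseWindow (n : ℕ) : SimpleGraph (Fin 2 × ZMod n) :=
  SimpleGraph.fromRel (fun p q =>
    (p.1 = 0 ∧ q.1 = 0 ∧ q.2 = p.2 + 1) ∨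
    (p.1 = 1 ∧ q.1 = 1 ∧ q.2 = p.2 + 2) ∨
    (p.1 = 1 ∧ q.1 = 0 ∧ (q.2 = p.2 ∨ q.2 = p.2 + 1)))

section Aux
set_option linter.unusedSectionVars false
variable {n : ℕ} [NeZero n]

lemma cast_ne_zero (hn : 5 ≤ n) {k : ℕ} (hk0 : 0 < k) (hk : k < 5) : ((k : ZMod n)) ≠ 0 := by
  rw [Ne, ZMod.natCast_eq_zero_iff]
  intro h; have := Nat.le_of_dvd hk0 h; omega

lemma two_ne (hn : 5 ≤ n) : (2 : ZMod n) ≠ 0 := by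
  have := cast_ne_zero (n := n) hn (k := 2) (by norm_num) (by norm_num); exact_mod_cast this

lemma one_ne (hn : 5 ≤ n) : (1 : ZMod n) ≠ 0 := by
  have := cast_ne_zero (n := n) hn (k := 1) (by norm_num) (by norm_num); exact_mod_cast this

lemma four_ne (hn : 5 ≤ n) : (4 : ZMod n) ≠ 0 := by
  have := cast_ne_zero (n := n) hn (k := 4) (by norm_num) (by norm_num); exact_mod_cast this

lemma adj_vv (hn : 5 ≤ n) (i j : ZMod n) :
    (roseWindow n).Adj (0, i) (0, j) ↔ j = i + 1 ∨ j = i - 1 := by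
  have h1 := one_ne (n := n) hn
  simp only [roseWindow, SimpleGraph.fromRel_adj, Prod.mk.injEq, ne_eq,
    show ((0 : Fin 2) = 1) = False by simp, show ((1 : Fin 2) = 0) = False by simp,
    false_and, and_false, or_false, false_or, true_and, not_and]
  constructor
  · rintro ⟨hne, h | h⟩
    · exact Or.inl h
    · right; rw [eq_sub_iff_add_eq]; exact h.symm
  · rintro (h | h)
    · subst h
      exact ⟨fun h => h1 (left_eq_add.mp h), Or.inl rfl⟩
    · rw [eq_sub_iff_add_eq] at h
      refine ⟨fun hij => h1 ?_, Or.inr h.symm⟩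
      rw [hij] at h
      exact (add_eq_left.mp h)

lemma adj_vu (hn : 5 ≤ n) (i j : ZMod n) :
    (roseWindow n).Adj (0, i) (1, j) ↔ j = i ∨ j = i - 1 := by
  simp only [roseWindow, SimpleGraph.fromRel_adj, Prod.mk.injEq, ne_eq,
    show ((0 : Fin 2) = 1) = False by simp, show ((1 : Fin 2) = 0) = False by simp,
    false_and, and_false, or_false, false_or, true_and, not_and]
  constructor
  · rintro ⟨hne, h | h⟩
    · exact Or.inl h.symm
    · right; rw [eq_sub_iff_add_eq]; exact h.symm
  · rintro (h | h)
    · exact ⟨fun h => absurd h (by simp), Or.inl h.symm⟩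
    · rw [eq_sub_iff_add_eq] at h
      exact ⟨fun h => absurd h (by simp), Or.inr h.symm⟩

lemma adj_uv (hn : 5 ≤ n) (i j : ZMod n) :
    (roseWindow n).Adj (1, i) (0, j) ↔ j = i ∨ j = i + 1 := by
  simp only [roseWindow, SimpleGraph.fromRel_adj, Prod.mk.injEq, ne_eq,
    show ((0 : Fin 2) = 1) = False by simp, show ((1 : Fin 2) = 0) = False by simp,
    false_and, and_false, or_false, false_or, true_and, not_and]
  constructor
  · rintro ⟨hne, h⟩
    exact h
  · intro h
    exact ⟨fun h => absurd h (by simp), h⟩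

lemma adj_uu (hn : 5 ≤ n) (i j : ZMod n) :
    (roseWindow n).Adj (1, i) (1, j) ↔ j = i + 2 ∨ j = i - 2 := by
  have h2 := two_ne (n := n) hn
  simp only [roseWindow, SimpleGraph.fromRel_adj, Prod.mk.injEq, ne_eq,
    show ((0 : Fin 2) = 1) = False by simp, show ((1 : Fin 2) = 0) = False by simp,
    false_and, and_false, or_false, false_or, true_and, not_and]
  constructor
  · rintro ⟨hne, h | h⟩
    · exact Or.inl h
    · right; rw [eq_sub_iff_add_eq]; exact h.symm
  · rintro (h | h)
    · subst h
      exact ⟨fun h => h2 (left_eq_add.mp h), Or.inl rfl⟩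
    · rw [eq_sub_iff_add_eq] at h
      refine ⟨fun hij => h2 ?_, Or.inr h.symm⟩
      rw [hij] at h
      exact (add_eq_left.mp h)


lemma sum_ite_or (g : ZMod n → ℝ) (c d : ZMod n) (hcd : c ≠ d) :
    (∑ j : ZMod n, if j = c ∨ j = d then g j else 0) = g c + g d := by
  have h : ∀ j : ZMod n, (if j = c ∨ j = d then g j else 0)
      = (if j = c then g j else 0) + (if j = d then g j else 0) := by
    intro j; by_cases h1 : j = c <;> by_cases h2 : j = d <;> simp_all
  simp only [h, Finset.sum_add_distrib, Finset.sum_ite_eq' Finset.univ, Finset.mem_univ, if_true]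

lemma row_v (hn : 5 ≤ n) (f : Fin 2 × ZMod n → ℝ) (i : ZMod n) :
    (adjMat (roseWindow n) *ᵥ f) (0, i) = f (0, i + 1) + f (0, i - 1) + f (1, i) + f (1, i - 1) := by
  classical
  have hne1 : i + 1 ≠ i - 1 := by
    intro h; apply two_ne (n := n) hn; linear_combination h
  have hne2 : i ≠ i - 1 := by
    intro h; apply one_ne (n := n) hn; linear_combination h
  simp only [adjMat, Matrix.mulVec, dotProduct, Matrix.of_apply, ite_mul, one_mul, zero_mul]
  rw [Fintype.sum_prod_type, Fin.sum_univ_two]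
  simp only [adj_vv hn i, adj_vu hn i]
  rw [sum_ite_or _ _ _ hne1, sum_ite_or _ _ _ hne2]
  ring

lemma row_u (hn : 5 ≤ n) (f : Fin 2 × ZMod n → ℝ) (i : ZMod n) :
    (adjMat (roseWindow n) *ᵥ f) (1, i) = f (0, i) + f (0, i + 1) + f (1, i + 2) + f (1, i - 2) := by
  classical
  have hne1 : i ≠ i + 1 := by
    intro h; apply one_ne (n := n) hn; linear_combination - h
  have hne2 : i + 2 ≠ i - 2 := by
    intro h; apply four_ne (n := n) hn; linear_combination h
  simp only [adjMat, Matrix.mulVec, dotProduct, Matrix.of_apply, ite_mul, one_mul, zero_mul]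
  rw [Fintype.sum_prod_type, Fin.sum_univ_two]
  simp only [adj_uv hn i, adj_uu hn i]
  rw [sum_ite_or _ _ _ hne1, sum_ite_or _ _ _ hne2]
  ring


lemma per_iterate (x : ZMod n → ℝ) (hper : ∀ i, x (i + 3) = x i) :
    ∀ (m : ℕ) (i : ZMod n), x (i + 3 * (m : ZMod n)) = x i := by
  intro m
  induction m with
  | zero => intro i; simp
  | succ m ih =>
      intro i
      have h : (i + 3 * ((m + 1 : ℕ) : ZMod n)) = (i + 3 * (m : ZMod n)) + 3 := by
        push_cast; ring
      rw [h, hper, ih]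

lemma ker_iff (hn : 5 ≤ n) (f : Fin 2 × ZMod n → ℝ) :
    adjMat (roseWindow n) *ᵥ f = 0 ↔
      (∀ i : ZMod n, f (0, i + 3) = f (0, i)) ∧
      (∀ i : ZMod n, f (1, i) = - f (0, i - 1)) := by
  constructor
  · intro h
    set x : ZMod n → ℝ := fun i => f (0, i) with hx
    set y : ZMod n → ℝ := fun i => f (1, i) with hy
    have h1 : ∀ i : ZMod n, x (i + 1) + x (i - 1) + y i + y (i - 1) = 0 := by
      intro i
      have := congrFun h (0, i)
      rw [row_v hn f i] at this
      simpa using this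
    have h2 : ∀ i : ZMod n, x i + x (i + 1) + y (i + 2) + y (i - 2) = 0 := by
      intro i
      have := congrFun h (1, i)
      rw [row_u hn f i] at this
      simpa using this
    have h1' : ∀ i : ZMod n, x (i + 2) + x i + y (i + 1) + y i = 0 := by
      intro i
      have := h1 (i + 1)
      rw [show i + 1 + 1 = i + 2 by ring, show i + 1 - 1 = i by ring] at this
      linarith
    have h2' : ∀ i : ZMod n, x (i + 2) + x (i + 3) + y (i + 4) + y i = 0 := by
      intro i
      have := h2 (i + 2)
      rw [show i + 2 + 1 = i + 3 by ring, show i + 2 + 2 = i + 4 by ring,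
        show i + 2 - 2 = i by ring] at this
      linarith
    set e : ZMod n → ℝ := fun i => y (i + 1) + x i with he
    set p : ZMod n → ℝ := fun i => x i - x (i + 3) with hp
    have hA : ∀ i : ZMod n, e i + e (i + 1) = p i := by
      intro i
      have := h1' (i + 1)
      rw [show i + 1 + 2 = i + 3 by ring, show i + 1 + 1 = i + 2 by ring] at this
      simp only [he, hp]
      rw [show i + 1 + 1 = i + 2 by ring]
      linarith
    have hB : ∀ i : ZMod n, e i + e (i + 4) = p i := by
      intro i
      have := h2' (i + 1)
      rw [show i + 1 + 2 = i + 3 by ring, show i + 1 + 3 = i + 4 by ring,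
        show i + 1 + 4 = i + 5 by ring] at this
      simp only [he, hp, show ∀ j : ZMod n, j + 4 + 1 = j + 5 from fun j => by ring]
      linarith
    have hE : ∀ i : ZMod n, e (i + 3) = e i := by
      intro i
      have hA' := hA (i - 1)
      have hB' := hB (i - 1)
      rw [show i - 1 + 1 = i by ring] at hA'
      rw [show i - 1 + 4 = i + 3 by ring] at hB'
      linarith
    have hPper : ∀ i : ZMod n, p (i + 3) = p i := by
      intro i
      have h1 := hA (i + 3)
      rw [show i + 3 + 1 = (i + 1) + 3 by ring, hE, hE] at h1
      have h2 := hA i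
      linarith
    have hPiter := per_iterate p hPper
    have hiter : ∀ (m : ℕ) (i : ZMod n), x (i + 3 * (m : ZMod n)) = x i - m * p i := by
      intro m
      induction m with
      | zero => intro i; simp
      | succ m ih =>
          intro i
          have harg : (i + 3 * ((m + 1 : ℕ) : ZMod n)) = (i + 3 * (m : ZMod n)) + 3 := by
            push_cast; ring
          have hx3 : x ((i + 3 * (m : ZMod n)) + 3) = x (i + 3 * (m : ZMod n)) - p (i + 3 * (m : ZMod n)) := by
            simp only [hp]; ring
          rw [harg, hx3, ih, hPiter]
          push_cast; ring
    have hp0 : ∀ i : ZMod n, p i = 0 := by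
      intro i
      have := hiter n i
      rw [ZMod.natCast_self, mul_zero, add_zero] at this
      have hn0 : (n : ℝ) ≠ 0 := Nat.cast_ne_zero.mpr (NeZero.ne n)
      have : (n : ℝ) * p i = 0 := by linarith
      rcases mul_eq_zero.mp this with h | h
      · exact absurd h hn0
      · exact h
    have he0 : ∀ i : ZMod n, e i = 0 := by
      intro i
      have a1 := hA i; have a2 := hA (i + 1); have a3 := hA (i + 2)
      rw [show i + 1 + 1 = i + 2 by ring] at a2
      rw [show i + 2 + 1 = i + 3 by ring] at a3
      have hE' := hE i
      rw [hp0 i] at a1; rw [hp0 (i+1)] at a2; rw [hp0 (i+2)] at a3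
      linarith
    constructor
    · intro i
      have := hp0 i
      simp only [hp] at this
      have : x (i + 3) = x i := by linarith
      exact this
    · intro i
      have := he0 (i - 1)
      simp only [he] at this
      rw [show i - 1 + 1 = i by ring] at this
      have : y i = - x (i - 1) := by linarith
      exact this
  · rintro ⟨hper, hy⟩
    funext q
    rcases q with ⟨b, i⟩
    fin_cases b
    · rw [show ((⟨0, by norm_num⟩ : Fin 2), i) = ((0 : Fin 2), i) from rfl]
      rw [Pi.zero_apply, row_v hn f i]
      have e1 := hper (i - 2)
      rw [show i - 2 + 3 = i + 1 by ring] at e1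
      rw [hy i, hy (i - 1), show i - 1 - 1 = i - 2 by ring]
      linarith
    · rw [show ((⟨1, by norm_num⟩ : Fin 2), i) = ((1 : Fin 2), i) from rfl]
      rw [Pi.zero_apply, row_u hn f i]
      have e1 := hper (i - 3)
      rw [show i - 3 + 3 = i by ring] at e1
      rw [hy (i + 2), hy (i - 2), show i + 2 - 1 = i + 1 by ring,
        show i - 2 - 1 = i - 3 by ring]
      linarith


/-- The canonical kernel vector `(1,…,1,-1,…,-1)`. -/
def gvec (n : ℕ) : Fin 2 × ZMod n → ℝ := fun p => if p.1 = 0 then 1 else -1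

lemma gvec_mem (hn : 5 ≤ n) : adjMat (roseWindow n) *ᵥ gvec n = 0 := by
  rw [ker_iff hn]
  constructor
  · intro i; rfl
  · intro i; norm_num [gvec]

lemma gvec_ne_zero : gvec n ≠ 0 := by
  intro h
  have := congrFun h ((0 : Fin 2), (0 : ZMod n))
  simp [gvec] at this

/-- When `3 ∤ n`, every kernel vector is a multiple of `gvec`. -/
lemma ker_eq_smul (hn : 5 ≤ n) (h3 : ¬ (3 ∣ n)) (f : Fin 2 × ZMod n → ℝ)
    (hf : adjMat (roseWindow n) *ᵥ f = 0) : f = f (0, 0) • gvec n := by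
  obtain ⟨hper, hy⟩ := (ker_iff hn f).mp hf
  have hiter := per_iterate (n := n) (fun i => f (0, i)) hper
  have hcop : Nat.Coprime 3 n := (Nat.Prime.coprime_iff_not_dvd Nat.prime_three).mpr h3
  set u : (ZMod n)ˣ := ZMod.unitOfCoprime 3 hcop with hu
  have hu3 : (u : ZMod n) = 3 := by
    rw [hu, ZMod.coe_unitOfCoprime]; norm_num
  have hconst : ∀ i : ZMod n, f (0, i) = f (0, 0) := by
    intro i
    set c : ZMod n := i * ((u⁻¹ : (ZMod n)ˣ) : ZMod n) with hc
    have h3c : 3 * c = i := by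
      rw [hc, ← hu3, ← mul_assoc]
      have : (u : ZMod n) * ((u⁻¹ : (ZMod n)ˣ) : ZMod n) = 1 := by
        rw [← Units.val_mul, mul_inv_cancel, Units.val_one]
      rw [mul_comm (u : ZMod n) i, mul_assoc, this, mul_one]
    have := hiter c.val 0
    rw [ZMod.natCast_zmod_val, zero_add, h3c] at this
    exact this
  funext q
  rcases q with ⟨b, i⟩
  fin_cases b
  · show f (0, i) = f (0, 0) • gvec n (0, i)
    simp [gvec, hconst i]
  · show f (1, i) = f (0, 0) • gvec n (1, i)
    rw [hy i, hconst (i - 1)]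
    simp [gvec]


/-- The parametrisation of the kernel by `ZMod 3 → ℝ` when `3 ∣ n`. -/
noncomputable def psi (h3 : 3 ∣ n) : (ZMod 3 → ℝ) →ₗ[ℝ] (Fin 2 × ZMod n → ℝ) where
  toFun a := fun p => if p.1 = 0 then a (ZMod.castHom h3 (ZMod 3) p.2)
    else - a (ZMod.castHom h3 (ZMod 3) (p.2 - 1))
  map_add' a b := by
    funext p; by_cases h : p.1 = 0 <;> simp [h] <;> ring
  map_smul' c a := by
    funext p; by_cases h : p.1 = 0 <;> simp [h] <;> ring

lemma psi_apply0 (h3 : 3 ∣ n) (a : ZMod 3 → ℝ) (i : ZMod n) :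
    psi h3 a (0, i) = a (ZMod.castHom h3 (ZMod 3) i) := by simp [psi]

lemma psi_apply1 (h3 : 3 ∣ n) (a : ZMod 3 → ℝ) (i : ZMod n) :
    psi h3 a (1, i) = - a (ZMod.castHom h3 (ZMod 3) (i - 1)) := by simp [psi]

lemma castHom_add_three (h3 : 3 ∣ n) (i : ZMod n) :
    ZMod.castHom h3 (ZMod 3) (i + 3) = ZMod.castHom h3 (ZMod 3) i := by
  rw [map_add, show (3 : ZMod n) = ((3 : ℕ) : ZMod n) by push_cast; ring, map_natCast]
  rw [show ((3 : ℕ) : ZMod 3) = 0 from by decide, add_zero]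

lemma castHom_val (h3 : 3 ∣ n) (i : ZMod n) :
    ZMod.castHom h3 (ZMod 3) i = ((i.val : ℕ) : ZMod 3) := by
  rw [ZMod.castHom_apply, ← ZMod.natCast_val]

lemma psi_mem (hn : 5 ≤ n) (h3 : 3 ∣ n) (a : ZMod 3 → ℝ) :
    adjMat (roseWindow n) *ᵥ psi h3 a = 0 := by
  rw [ker_iff hn]
  constructor
  · intro i
    rw [psi_apply0, psi_apply0, castHom_add_three]
  · intro i
    rw [psi_apply1, psi_apply0]

lemma psi_inj (h3 : 3 ∣ n) : Function.Injective (psi h3) := by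
  intro a b hab
  funext r
  have := congrFun hab ((0 : Fin 2), ((r.val : ℕ) : ZMod n))
  rw [psi_apply0, psi_apply0, map_natCast] at this
  rwa [show ((r.val : ℕ) : ZMod 3) = r from ZMod.natCast_zmod_val r] at this

lemma ker_sub_range (hn : 5 ≤ n) (h3 : 3 ∣ n) (f : Fin 2 × ZMod n → ℝ)
    (hf : adjMat (roseWindow n) *ᵥ f = 0) : ∃ a : ZMod 3 → ℝ, psi h3 a = f := by
  obtain ⟨hper, hy⟩ := (ker_iff hn f).mp hf
  have hiter := per_iterate (n := n) (fun i => f (0, i)) hper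
  have hc : ∀ i j : ZMod n,
      ZMod.castHom h3 (ZMod 3) i = ZMod.castHom h3 (ZMod 3) j → f (0, i) = f (0, j) := by
    intro i j hij
    rw [castHom_val, castHom_val, ZMod.natCast_eq_natCast_iff] at hij
    have hmod : i.val % 3 = j.val % 3 := hij
    have hivlt : i.val < n := ZMod.val_lt i
    have hjvlt : j.val < n := ZMod.val_lt j
    obtain ⟨m, hm⟩ : ∃ m : ℕ, i.val + 3 * m = j.val + 3 * n := by
      refine ⟨(j.val + 3 * n - i.val) / 3, ?_⟩
      omega
    have hcast : i + 3 * ((m : ℕ) : ZMod n) = j := by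
      have h0 : ((i.val + 3 * m : ℕ) : ZMod n) = ((j.val + 3 * n : ℕ) : ZMod n) := by
        rw [hm]
      push_cast at h0
      rw [ZMod.natCast_zmod_val, ZMod.natCast_zmod_val, ZMod.natCast_self] at h0
      rw [mul_zero, add_zero] at h0
      exact h0
    have := hiter m i
    rw [hcast] at this
    exact this.symm
  refine ⟨fun r => f (0, ((r.val : ℕ) : ZMod n)), ?_⟩
  funext q
  rcases q with ⟨b, i⟩
  fin_cases b
  · show psi h3 _ (0, i) = f (0, i)
    rw [psi_apply0]
    apply hc
    rw [map_natCast, castHom_val]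
    exact (ZMod.natCast_zmod_val _)
  · show psi h3 _ (1, i) = f (1, i)
    rw [psi_apply1, hy i]
    congr 1
    apply hc
    rw [map_natCast, castHom_val]
    exact (ZMod.natCast_zmod_val _)

lemma finrank_three (hn : 5 ≤ n) (h3 : 3 ∣ n) :
    Module.finrank ℝ (LinearMap.ker (Matrix.mulVecLin (adjMat (roseWindow n)))) = 3 := by
  classical
  have hrange : LinearMap.ker (Matrix.mulVecLin (adjMat (roseWindow n)))
      = LinearMap.range (psi (n := n) h3) := by
    apply le_antisymm
    · intro f hf
      rw [LinearMap.mem_ker, Matrix.mulVecLin_apply] at hf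
      obtain ⟨a, ha⟩ := ker_sub_range hn h3 f hf
      exact ⟨a, ha⟩
    · rintro f ⟨a, rfl⟩
      rw [LinearMap.mem_ker, Matrix.mulVecLin_apply]
      exact psi_mem hn h3 a
  rw [hrange, LinearMap.finrank_range_of_inj (psi_inj h3),
    Module.finrank_fintype_fun_eq_card, ZMod.card]

end Aux

/-- For every `n ≥ 5` the Rose Window graph `R_n(1,2)` is a
core graph; it is a nut graph iff `3 ∤ n`, and when `3 ∣ n` its adjacency
matrix has nullity `3`. -/
theorem roseWindow_core_and_nut_iff (n : ℕ) [NeZero n] (hn : 5 ≤ n) :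
    IsCoreGraph (roseWindow n) ∧
    (IsNutGraph (roseWindow n) ↔ ¬ (3 ∣ n)) ∧
    (3 ∣ n →
      Module.finrank ℝ (LinearMap.ker (Matrix.mulVecLin (adjMat (roseWindow n)))) = 3) := by
  classical
  have hg := gvec_mem (n := n) hn
  refine ⟨⟨gvec n, hg, ?_⟩, ?_, fun h3 => finrank_three hn h3⟩
  · rintro ⟨b, i⟩
    fin_cases b <;> norm_num [gvec]
  · constructor
    · rintro ⟨hdim, -⟩ h3
      rw [finrank_three hn h3] at hdim
      omega
    · intro h3
      constructor
      · have hspan : LinearMap.ker (Matrix.mulVecLin (adjMat (roseWindow n)))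
            = Submodule.span ℝ {gvec n} := by
          apply le_antisymm
          · intro f hf
            rw [LinearMap.mem_ker, Matrix.mulVecLin_apply] at hf
            rw [Submodule.mem_span_singleton]
            exact ⟨f (0, 0), (ker_eq_smul hn h3 f hf).symm⟩
          · rw [Submodule.span_le, Set.singleton_subset_iff, SetLike.mem_coe,
              LinearMap.mem_ker, Matrix.mulVecLin_apply]
            exact hg
        rw [hspan]
        exact finrank_span_singleton gvec_ne_zero
      · intro f hf hne v
        have hrep := ker_eq_smul hn h3 f hf
        have hc : f (0, 0) ≠ 0 := by
          intro h0; apply hne; rw [hrep, h0, zero_smul]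
        rw [hrep]
        rcases v with ⟨b, i⟩
        fin_cases b <;> simpa [gvec] using hc

end NutPaper
end

section
/- Let G be a connected bipartite (2p)-regular simple graph, where p ≥ 1. Let M_5(G) be the graph obtained from G by fusing a bouquet of p pentagons (5-cycles) to every vertex of G. Then M_5(G) is a nut graph. -/
/-!
In a kernel vector of `M₅(G)` with value `a` at a vertex `v` of `G`, the equations at the four
new vertices of a pentagon fused to `v` force the values `a, -a, -a, a` along it. The equation
at `v` then says that the restriction `y` to `G` satisfies `A y = -2p y`. Since `G` is bipartite,
flipping the sign of `y` on one colour class turns this into `A y' = 2p y'`; for a connected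
`2p`-regular graph this means `y'` lies in the kernel of the Laplacian, so it is constant. Hence
the kernel is spanned by the vector that is `±1` on the two colour classes, extended along every
pentagon, and none of its entries vanishes.
-/

namespace NutPaper

open Matrix

variable {V : Type*}

/-- The pentagon-multiplier construction `M₅(G)`: a bouquet of `p` pentagons is
fused to every vertex of `G`.  For each vertex `v` and each `i : Fin p`, the
new vertices `(v, i, 0), (v, i, 1), (v, i, 2), (v, i, 3)` form, together with
`v`, the `i`-th pentagon at `v`, with edges
`v—(v,i,0)—(v,i,1)—(v,i,2)—(v,i,3)—v`. -/
def pentagonMultiplier (G : SimpleGraph V) (p : ℕ) :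
    SimpleGraph (V ⊕ V × Fin p × Fin 4) :=
  SimpleGraph.fromRel (fun a b =>
    (∃ u v, a = Sum.inl u ∧ b = Sum.inl v ∧ G.Adj u v) ∨
    (∃ v i, a = Sum.inl v ∧ (b = Sum.inr (v, i, 0) ∨ b = Sum.inr (v, i, 3))) ∨
    (∃ v i, (a = Sum.inr (v, i, 0) ∧ b = Sum.inr (v, i, 1)) ∨
            (a = Sum.inr (v, i, 1) ∧ b = Sum.inr (v, i, 2)) ∨
            (a = Sum.inr (v, i, 2) ∧ b = Sum.inr (v, i, 3))))

section AdjMat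

variable (G : SimpleGraph V)

lemma adjMat_eq_adjMatrix [DecidableRel G.Adj] : adjMat G = G.adjMatrix ℝ := by
  ext u v
  simp only [adjMat, of_apply, SimpleGraph.adjMatrix_apply]
  congr

variable [Fintype V]

open scoped Classical in
lemma adjMat_mulVec_apply (x : V → ℝ) (v : V) :
    (adjMat G *ᵥ x) v = ∑ u, if G.Adj v u then x u else 0 := by
  simp [mulVec, dotProduct, adjMat]

lemma adjMat_mulVec_apply_of_adj_iff {w a b : V} (hab : a ≠ b)
    (hadj : ∀ u, G.Adj w u ↔ u = a ∨ u = b) (x : V → ℝ) :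
    (adjMat G *ᵥ x) w = x a + x b := by
  classical
  simp_rw [adjMat_mulVec_apply, hadj, ← Finset.sum_filter]
  rw [show Finset.univ.filter (fun u => u = a ∨ u = b) = {a, b} by ext; simp,
    Finset.sum_pair hab]

lemma isNutGraph_of_ker_eq_span [Nonempty V] {z : V → ℝ}
    (hker : LinearMap.ker (mulVecLin (adjMat G)) = Submodule.span ℝ {z})
    (hz : ∀ v, z v ≠ 0) : IsNutGraph G := by
  have hz0 : z ≠ 0 := fun h => hz (Classical.arbitrary V) (by simp [h])
  refine ⟨by rw [hker]; exact finrank_span_singleton hz0, fun x hx hx0 v => ?_⟩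
  have hxz : x ∈ Submodule.span ℝ {z} := hker ▸ hx
  obtain ⟨c, rfl⟩ := Submodule.mem_span_singleton.mp hxz
  have hc : c ≠ 0 := by rintro rfl; simp at hx0
  exact mul_ne_zero hc (hz v)

end AdjMat

section RegularBipartite

open SimpleGraph

variable {G : SimpleGraph V}

lemma eq_of_adjMatrix_mulVec_eq_degree_smul [Fintype V] [DecidableRel G.Adj] {d : ℕ}
    (hconn : G.Connected) (hreg : G.IsRegularOfDegree d) {y : V → ℝ}
    (hy : G.adjMatrix ℝ *ᵥ y = (d : ℝ) • y) (u v : V) : y u = y v := by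
  classical
  have hlap : G.lapMatrix ℝ *ᵥ y = 0 := by
    ext w
    rw [lapMatrix_mulVec_apply, ← adjMatrix_mulVec_apply, hy, hreg w]
    simp
  exact (lapMatrix_mulVec_eq_zero_iff_forall_reachable G).mp hlap u v (hconn u v)

def twoColoringSign (C : G.Coloring (Fin 2)) (v : V) : ℝ := if C v = 0 then 1 else -1

variable (C : G.Coloring (Fin 2))

lemma twoColoringSign_mul_self (v : V) : twoColoringSign C v * twoColoringSign C v = 1 := by
  unfold twoColoringSign; split_ifs <;> norm_num

lemma twoColoringSign_ne_zero (v : V) : twoColoringSign C v ≠ 0 := by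
  unfold twoColoringSign; split_ifs <;> norm_num

lemma twoColoringSign_eq_neg_of_adj {u v : V} (h : G.Adj u v) :
    twoColoringSign C u = -twoColoringSign C v := by
  have hne := C.valid h
  unfold twoColoringSign
  revert hne
  generalize C u = a
  generalize C v = b
  fin_cases a <;> fin_cases b <;> norm_num

variable [Fintype V] [DecidableRel G.Adj] {d : ℕ}

lemma adjMatrix_mulVec_twoColoringSign_mul (y : V → ℝ) (v : V) :
    (G.adjMatrix ℝ *ᵥ (twoColoringSign C * y)) v =
      -twoColoringSign C v * (G.adjMatrix ℝ *ᵥ y) v := by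
  simp only [adjMatrix_mulVec_apply, Finset.mul_sum, Pi.mul_apply]
  refine Finset.sum_congr rfl fun u hu => ?_
  rw [twoColoringSign_eq_neg_of_adj C ((mem_neighborFinset G v u).mp hu).symm]

lemma adjMatrix_mulVec_eq_neg_smul_iff (hconn : G.Connected) (hreg : G.IsRegularOfDegree d)
    (y : V → ℝ) :
    G.adjMatrix ℝ *ᵥ y = -(d : ℝ) • y ↔ ∃ c : ℝ, y = c • twoColoringSign C := by
  constructor
  · intro hy
    have hflip : G.adjMatrix ℝ *ᵥ (twoColoringSign C * y) =
        (d : ℝ) • (twoColoringSign C * y) := by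
      ext v
      rw [adjMatrix_mulVec_twoColoringSign_mul, hy]
      simp only [Pi.smul_apply, Pi.mul_apply, smul_eq_mul]
      ring
    obtain ⟨v₀⟩ := hconn.nonempty
    refine ⟨twoColoringSign C v₀ * y v₀, funext fun v => ?_⟩
    have hv := eq_of_adjMatrix_mulVec_eq_degree_smul hconn hreg hflip v v₀
    simp only [Pi.mul_apply, Pi.smul_apply, smul_eq_mul] at hv ⊢
    calc y v = twoColoringSign C v * (twoColoringSign C v * y v) := by
          rw [← mul_assoc, twoColoringSign_mul_self, one_mul]
      _ = _ := by rw [hv, mul_comm]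
  · rintro ⟨c, rfl⟩
    ext v
    have h := adjMatrix_mulVec_twoColoringSign_mul C (Function.const V c) v
    rw [adjMatrix_mulVec_const_apply_of_regular hreg,
      show twoColoringSign C * Function.const V c = c • twoColoringSign C by
        ext; simp [mul_comm]] at h
    simp only [h, Pi.smul_apply, smul_eq_mul]
    ring

end RegularBipartite

section PentagonMultiplier

variable (G : SimpleGraph V) (p : ℕ)

lemma pentagonMultiplier_adj_inl_inl (u v : V) :
    (pentagonMultiplier G p).Adj (Sum.inl u) (Sum.inl v) ↔ G.Adj u v := by
  simp only [pentagonMultiplier, SimpleGraph.fromRel_adj]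
  grind [SimpleGraph.adj_comm, SimpleGraph.Adj.ne]

lemma pentagonMultiplier_adj_inl_inr (v : V) (w : V × Fin p × Fin 4) :
    (pentagonMultiplier G p).Adj (Sum.inl v) (Sum.inr w) ↔
      w.1 = v ∧ (w.2.2 = 0 ∨ w.2.2 = 3) := by
  obtain ⟨u, i, k⟩ := w
  simp [pentagonMultiplier, ← and_or_left]

variable (v : V) (i : Fin p) (b : V ⊕ V × Fin p × Fin 4)

lemma pentagonMultiplier_adj_inr_zero :
    (pentagonMultiplier G p).Adj (Sum.inr (v, i, 0)) b ↔
      b = Sum.inl v ∨ b = Sum.inr (v, i, 1) := by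
  rcases b with u | ⟨u, j, k⟩ <;> grind [pentagonMultiplier, SimpleGraph.fromRel_adj]

lemma pentagonMultiplier_adj_inr_one :
    (pentagonMultiplier G p).Adj (Sum.inr (v, i, 1)) b ↔
      b = Sum.inr (v, i, 0) ∨ b = Sum.inr (v, i, 2) := by
  rcases b with u | ⟨u, j, k⟩ <;> grind [pentagonMultiplier, SimpleGraph.fromRel_adj]

lemma pentagonMultiplier_adj_inr_two :
    (pentagonMultiplier G p).Adj (Sum.inr (v, i, 2)) b ↔
      b = Sum.inr (v, i, 1) ∨ b = Sum.inr (v, i, 3) := by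
  rcases b with u | ⟨u, j, k⟩ <;> grind [pentagonMultiplier, SimpleGraph.fromRel_adj]

lemma pentagonMultiplier_adj_inr_three :
    (pentagonMultiplier G p).Adj (Sum.inr (v, i, 3)) b ↔
      b = Sum.inr (v, i, 2) ∨ b = Sum.inl v := by
  rcases b with u | ⟨u, j, k⟩ <;> grind [pentagonMultiplier, SimpleGraph.fromRel_adj]

variable [Fintype V] (x : V ⊕ V × Fin p × Fin 4 → ℝ)

lemma pentagonMultiplier_mulVec_inr_zero :
    (adjMat (pentagonMultiplier G p) *ᵥ x) (Sum.inr (v, i, 0)) =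
      x (Sum.inl v) + x (Sum.inr (v, i, 1)) :=
  adjMat_mulVec_apply_of_adj_iff _ (by simp) (pentagonMultiplier_adj_inr_zero G p v i) x

lemma pentagonMultiplier_mulVec_inr_one :
    (adjMat (pentagonMultiplier G p) *ᵥ x) (Sum.inr (v, i, 1)) =
      x (Sum.inr (v, i, 0)) + x (Sum.inr (v, i, 2)) :=
  adjMat_mulVec_apply_of_adj_iff _ (by simp) (pentagonMultiplier_adj_inr_one G p v i) x

lemma pentagonMultiplier_mulVec_inr_two :
    (adjMat (pentagonMultiplier G p) *ᵥ x) (Sum.inr (v, i, 2)) =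
      x (Sum.inr (v, i, 1)) + x (Sum.inr (v, i, 3)) :=
  adjMat_mulVec_apply_of_adj_iff _ (by simp) (pentagonMultiplier_adj_inr_two G p v i) x

lemma pentagonMultiplier_mulVec_inr_three :
    (adjMat (pentagonMultiplier G p) *ᵥ x) (Sum.inr (v, i, 3)) =
      x (Sum.inr (v, i, 2)) + x (Sum.inl v) :=
  adjMat_mulVec_apply_of_adj_iff _ (by simp) (pentagonMultiplier_adj_inr_three G p v i) x

lemma pentagonMultiplier_mulVec_inl :
    (adjMat (pentagonMultiplier G p) *ᵥ x) (Sum.inl v) =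
      (adjMat G *ᵥ (x ∘ Sum.inl)) v +
        ∑ i, (x (Sum.inr (v, i, 0)) + x (Sum.inr (v, i, 3))) := by
  classical
  simp only [adjMat_mulVec_apply, Fintype.sum_sum_type, pentagonMultiplier_adj_inl_inl,
    pentagonMultiplier_adj_inl_inr, Function.comp_apply, Fintype.sum_prod_type]
  simp [ite_and, ite_add_ite, Fin.sum_univ_four]

end PentagonMultiplier

section PentagonExtend

variable (p : ℕ)

def pentagonSign : Fin 4 → ℝ := ![1, -1, -1, 1]

def pentagonExtend (y : V → ℝ) : V ⊕ V × Fin p × Fin 4 → ℝ :=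
  Sum.elim y fun w => pentagonSign w.2.2 * y w.1

lemma pentagonExtend_smul (c : ℝ) (y : V → ℝ) :
    pentagonExtend p (c • y) = c • pentagonExtend p y := by
  ext (v | w)
  · rfl
  · simp only [pentagonExtend, Sum.elim_inr, Pi.smul_apply, smul_eq_mul]
    ring

lemma pentagonExtend_ne_zero {y : V → ℝ} (hy : ∀ v, y v ≠ 0)
    (w : V ⊕ V × Fin p × Fin 4) :
    pentagonExtend p y w ≠ 0 := by
  rcases w with v | ⟨v, i, k⟩
  · exact hy v
  · refine mul_ne_zero ?_ (hy v)
    fin_cases k <;> simp [pentagonSign]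

variable [Fintype V] (G : SimpleGraph V)

lemma eq_pentagonExtend_of_mulVec_eq_zero {x : V ⊕ V × Fin p × Fin 4 → ℝ}
    (hx : adjMat (pentagonMultiplier G p) *ᵥ x = 0) : x = pentagonExtend p (x ∘ Sum.inl) := by
  ext (v | ⟨v, i, k⟩)
  · rfl
  have h₀ := pentagonMultiplier_mulVec_inr_zero G p v i x
  have h₁ := pentagonMultiplier_mulVec_inr_one G p v i x
  have h₂ := pentagonMultiplier_mulVec_inr_two G p v i x
  have h₃ := pentagonMultiplier_mulVec_inr_three G p v i x
  simp only [hx, Pi.zero_apply] at h₀ h₁ h₂ h₃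
  fin_cases k <;>
    simp only [Fin.zero_eta, Fin.mk_one, Fin.reduceFinMk, Fin.isValue, pentagonExtend,
      pentagonSign, Function.comp_apply, Sum.elim_inr, cons_val_zero, cons_val_one, cons_val,
      neg_mul, one_mul] <;>
    linarith

lemma pentagonMultiplier_mulVec_pentagonExtend_eq_zero_iff (y : V → ℝ) :
    adjMat (pentagonMultiplier G p) *ᵥ pentagonExtend p y = 0 ↔
      adjMat G *ᵥ y = -((2 * p : ℕ) : ℝ) • y := by
  have hinr (w : V × Fin p × Fin 4) :
      (adjMat (pentagonMultiplier G p) *ᵥ pentagonExtend p y) (Sum.inr w) = 0 := by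
    obtain ⟨v, i, k⟩ := w
    fin_cases k <;>
      simp [pentagonMultiplier_mulVec_inr_zero, pentagonMultiplier_mulVec_inr_one,
        pentagonMultiplier_mulVec_inr_two, pentagonMultiplier_mulVec_inr_three, pentagonExtend,
        pentagonSign]
  have hinl (v : V) : (adjMat (pentagonMultiplier G p) *ᵥ pentagonExtend p y) (Sum.inl v) =
      (adjMat G *ᵥ y) v + 2 * p * y v := by
    simp [pentagonMultiplier_mulVec_inl, pentagonExtend, pentagonSign, two_mul, add_mul]
  constructor
  · intro h
    ext v
    have hv := congrFun h (Sum.inl v)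
    rw [hinl] at hv
    simp only [Pi.zero_apply, Pi.smul_apply, smul_eq_mul] at hv ⊢
    push_cast
    linarith
  · intro h
    ext (v | w)
    · rw [hinl, h]
      simp only [Pi.zero_apply, Pi.smul_apply, smul_eq_mul]
      push_cast
      ring
    · exact hinr w

end PentagonExtend

lemma ker_adjMat_pentagonMultiplier [Fintype V] {G : SimpleGraph V}
    [DecidableRel G.Adj] {p : ℕ} (hconn : G.Connected) (hreg : G.IsRegularOfDegree (2 * p))
    (C : G.Coloring (Fin 2)) :
    LinearMap.ker (mulVecLin (adjMat (pentagonMultiplier G p))) =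
      Submodule.span ℝ {pentagonExtend p (twoColoringSign C)} := by
  ext x
  simp only [LinearMap.mem_ker, mulVecLin_apply, Submodule.mem_span_singleton]
  constructor
  · intro hx
    have hext := eq_pentagonExtend_of_mulVec_eq_zero p G hx
    rw [hext, pentagonMultiplier_mulVec_pentagonExtend_eq_zero_iff, adjMat_eq_adjMatrix,
      adjMatrix_mulVec_eq_neg_smul_iff C hconn hreg] at hx
    obtain ⟨c, hc⟩ := hx
    rw [hext, hc, pentagonExtend_smul]
    exact ⟨c, rfl⟩
  · rintro ⟨c, rfl⟩
    rw [← pentagonExtend_smul, pentagonMultiplier_mulVec_pentagonExtend_eq_zero_iff,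
      adjMat_eq_adjMatrix, adjMatrix_mulVec_eq_neg_smul_iff C hconn hreg]
    exact ⟨c, rfl⟩

theorem pentagonMultiplier_isNutGraph_general {V : Type*} [Fintype V]
    (G : SimpleGraph V) [DecidableRel G.Adj] (p : ℕ)
    (hconn : G.Connected) (hbip : G.Colorable 2)
    (hreg : G.IsRegularOfDegree (2 * p)) :
    IsNutGraph (pentagonMultiplier G p) := by
  obtain ⟨C⟩ := hbip
  have : Nonempty V := hconn.nonempty
  exact isNutGraph_of_ker_eq_span _ (ker_adjMat_pentagonMultiplier hconn hreg C)
    (pentagonExtend_ne_zero p (twoColoringSign_ne_zero C))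

/-- If `G` is a connected bipartite `2p`-regular graph with
`p ≥ 1`, then `M₅(G)` is a nut graph. -/
theorem pentagonMultiplier_isNutGraph {V : Type*} [Fintype V]
    (G : SimpleGraph V) [DecidableRel G.Adj] (p : ℕ) (hp : 1 ≤ p)
    (hconn : G.Connected) (hbip : G.Colorable 2)
    (hreg : G.IsRegularOfDegree (2 * p)) :
    IsNutGraph (pentagonMultiplier G p) :=
  pentagonMultiplier_isNutGraph_general G p hconn hbip hreg

end NutPaper
end
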